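/- For all λ > 0, a ∈ (0,1], b > 0, we have ∫₀^∞ e^{a u - b/u} u^{λ-1} Γ(1/2 - λ, u) du = 2√π · ∫_{√(1-a)}^∞ (a + t²)^{-λ - 1/2} e^{-2√b t} dt, where Γ(p, y) denotes the upper incomplete Gamma function. -/

import Mathlib

open MeasureTheory Real Set

/-- Upper incomplete Gamma function `Γ(p, x) = ∫_x^∞ u^(p-1) e^(-u) du`. -/
noncomputable def uGamma (p x : ℝ) : ℝ := ∫ u in Set.Ioi x, u ^ (p - 1) * Real.exp (-u)

/-!
Writing `Γ(1/2 - λ, u) = u^(1/2 - λ) ∫_1^∞ s^(-λ-1/2) e^(-us) ds` and exchanging the order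
of integration (the integrand is nonnegative) turns the left side into
`∫_1^∞ s^(-λ-1/2) K(s - a, b) ds`, where `K(p, q) = ∫_0^∞ u^(-1/2) e^(-pu - q/u) du`.
The substitution `u = x²` and completing the square reduce `K` to the Cauchy–Schlömilch
integral `∫_0^∞ e^(-(αx - c/x)²) dx = √π / (2α)`, itself obtained by substituting
`y = αx - c/x` and exploiting the symmetry `x ↦ c / (α x)`; hence
`K(p, q) = √(π/p) e^(-2√(pq))`.
The substitution `s = a + t²` then yields the right side.
-/

section
variable {E : Type*} [NormedAddCommGroup E] [NormedSpace ℝ E]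

lemma image_sq_add_Ioi {r : ℝ} (hr : 0 ≤ r) (a : ℝ) :
    (fun t : ℝ => t ^ 2 + a) '' Ioi r = Ioi (r ^ 2 + a) :=
  (by fun_prop : Continuous fun t : ℝ => t ^ 2 + a).continuousOn.image_Ioi_of_strictMonoOn
    (fun x hx y hy hxy => by
      simp only [mem_Ici] at hx hy
      simpa using pow_lt_pow_left₀ hxy (hr.trans hx) two_ne_zero)
    (Filter.tendsto_atTop_add_const_right _ a (Filter.tendsto_pow_atTop two_ne_zero))

lemma hasDerivWithinAt_sq_add {s : Set ℝ} (a t : ℝ) :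
    HasDerivWithinAt (fun t : ℝ => t ^ 2 + a) (2 * t) s t := by
  simpa using ((hasDerivAt_pow 2 t).add_const a).hasDerivWithinAt

lemma injOn_sq_add {r : ℝ} (hr : 0 ≤ r) (a : ℝ) : InjOn (fun t : ℝ => t ^ 2 + a) (Ioi r) :=
  fun x hx y hy hxy => by
    simp only [mem_Ioi, add_left_inj] at hx hy hxy
    exact (pow_left_inj₀ (hr.trans hx.le) (hr.trans hy.le) two_ne_zero).1 hxy

lemma integral_comp_sq_add_Ioi {r : ℝ} (hr : 0 ≤ r) (a : ℝ) (g : ℝ → E) :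
    ∫ t in Ioi r, (2 * t) • g (t ^ 2 + a) = ∫ s in Ioi (r ^ 2 + a), g s := by
  rw [← image_sq_add_Ioi hr a, integral_image_eq_integral_abs_deriv_smul measurableSet_Ioi
    (fun t _ => hasDerivWithinAt_sq_add a t) (injOn_sq_add hr a)]
  refine setIntegral_congr_fun measurableSet_Ioi fun t ht => ?_
  rw [abs_of_pos (by linarith [mem_Ioi.1 ht])]

lemma integrableOn_comp_sq_add_Ioi_iff {r : ℝ} (hr : 0 ≤ r) (a : ℝ) (g : ℝ → E) :
    IntegrableOn (fun t => (2 * t) • g (t ^ 2 + a)) (Ioi r) ↔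
      IntegrableOn g (Ioi (r ^ 2 + a)) := by
  rw [← image_sq_add_Ioi hr a, integrableOn_image_iff_integrableOn_abs_deriv_smul
    measurableSet_Ioi (fun t _ => hasDerivWithinAt_sq_add a t) (injOn_sq_add hr a)]
  refine integrableOn_congr_fun (fun t ht => ?_) measurableSet_Ioi
  rw [abs_of_pos (by linarith [mem_Ioi.1 ht])]

lemma image_div_Ioi {k : ℝ} (hk : 0 < k) : (fun x : ℝ => k / x) '' Ioi 0 = Ioi 0 := by
  refine Subset.antisymm (image_subset_iff.2 fun x hx => div_pos hk hx) fun y hy => ?_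
  exact ⟨k / y, div_pos hk hy, div_div_cancel₀ hk.ne'⟩

lemma integral_comp_div_Ioi (g : ℝ → E) {k : ℝ} (hk : 0 < k) :
    ∫ x in Ioi 0, (k / x ^ 2) • g (k / x) = ∫ x in Ioi 0, g x := by
  have hderiv (x : ℝ) (hx : x ∈ Ioi 0) :
      HasDerivWithinAt (fun x => k / x) (-k / x ^ 2) (Ioi 0) x := by
    simpa [div_eq_mul_inv] using ((hasDerivAt_inv (ne_of_gt hx)).const_mul k).hasDerivWithinAt
  conv_rhs => rw [← image_div_Ioi hk, integral_image_eq_integral_abs_deriv_smul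
    measurableSet_Ioi hderiv fun x _ y _ hxy => by simpa [div_eq_mul_inv, hk.ne'] using hxy]
  simp [abs_div, abs_of_pos hk]
end

theorem integral_integral_swap_of_nonneg {α β : Type*} [MeasurableSpace α] [MeasurableSpace β]
    {μ : Measure α} {ν : Measure β} [SFinite μ] [SFinite ν] {f : α → β → ℝ}
    (hf : AEStronglyMeasurable (Function.uncurry f) (μ.prod ν))
    (hf_nonneg : ∀ᵐ y ∂ν, ∀ᵐ x ∂μ, 0 ≤ f x y)
    (hf_int : ∀ᵐ y ∂ν, Integrable (f · y) μ)
    (hf_int' : Integrable (fun y => ∫ x, f x y ∂μ) ν) :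
    ∫ x, ∫ y, f x y ∂ν ∂μ = ∫ y, ∫ x, f x y ∂μ ∂ν := by
  refine integral_integral_swap ((integrable_prod_iff' hf).2 ⟨hf_int, hf_int'.congr ?_⟩)
  filter_upwards [hf_nonneg] with y hy
  exact integral_congr_ae (hy.mono fun x hx => (norm_of_nonneg hx).symm)

lemma uGamma_eq_rpow_mul_integral_Ioi_one (p : ℝ) {u : ℝ} (hu : 0 < u) :
    uGamma p u = u ^ p * ∫ s in Ioi 1, s ^ (p - 1) * exp (-(u * s)) := by
  rw [uGamma, ← mul_one u, ← integral_comp_mul_left_Ioi' _ 1 hu, mul_one, smul_eq_mul,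
    ← integral_const_mul, ← integral_const_mul]
  refine setIntegral_congr_fun measurableSet_Ioi fun s hs => ?_
  have hs : 0 < s := zero_lt_one.trans hs
  rw [mul_rpow hu.le hs.le, rpow_sub_one hu.ne']
  field_simp

section
variable {α c : ℝ}

lemma strictMonoOn_mul_sub_div (hα : 0 < α) (hc : 0 < c) :
    StrictMonoOn (fun x : ℝ => α * x - c / x) (Ioi 0) := fun x hx y _ hxy => by
  have := div_lt_div_of_pos_left hc hx hxy
  dsimp only
  nlinarith

lemma image_mul_sub_div_Ioi (hα : 0 < α) (hc : 0 < c) :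
    (fun x : ℝ => α * x - c / x) '' Ioi 0 = univ := by
  refine eq_univ_of_forall fun y => ?_
  obtain ⟨s, hs0, hs⟩ : ∃ s : ℝ, 0 ≤ s ∧ s ^ 2 = y ^ 2 + 4 * α * c :=
    ⟨_, sqrt_nonneg _, sq_sqrt (by positivity)⟩
  have hys : 0 < y + s := by nlinarith
  refine ⟨(y + s) / (2 * α), div_pos hys (by positivity), ?_⟩
  field_simp
  linear_combination hs

lemma hasDerivAt_mul_sub_div {x : ℝ} (hx : x ≠ 0) :
    HasDerivAt (fun x : ℝ => α * x - c / x) (α + c / x ^ 2) x := by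
  simpa [div_eq_mul_inv] using
    ((hasDerivAt_id' x).const_mul α).fun_sub ((hasDerivAt_inv hx).const_mul c)

theorem integral_exp_neg_sq_mul_sub_div (hα : 0 < α) (hc : 0 < c) :
    ∫ x in Ioi 0, exp (-(α * x - c / x) ^ 2) = √π / (2 * α) := by
  set f : ℝ → ℝ := fun x => exp (-(α * x - c / x) ^ 2) with hf
  have hderiv (x : ℝ) (hx : x ∈ Ioi 0) :
      HasDerivWithinAt (fun x => α * x - c / x) (α + c / x ^ 2) (Ioi 0) x :=
    (hasDerivAt_mul_sub_div (ne_of_gt hx)).hasDerivWithinAt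
  have hinj := (strictMonoOn_mul_sub_div hα hc).injOn
  have habs : ∀ x ∈ Ioi (0 : ℝ),
      |α + c / x ^ 2| • exp (-(α * x - c / x) ^ 2) = (α + c / x ^ 2) * f x := fun x hx => by
    rw [abs_of_pos (by have : 0 < x := hx; positivity), smul_eq_mul]
  have hsub : ∫ x in Ioi 0, (α + c / x ^ 2) * f x = √π := by
    have := integral_image_eq_integral_abs_deriv_smul measurableSet_Ioi hderiv hinj
      (fun y => exp (-y ^ 2))
    rw [image_mul_sub_div_Ioi hα hc, setIntegral_univ,
      setIntegral_congr_fun measurableSet_Ioi habs] at this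
    simpa [← this] using integral_gaussian 1
  have hint : IntegrableOn (fun x => (α + c / x ^ 2) * f x) (Ioi 0) := by
    have := integrableOn_image_iff_integrableOn_abs_deriv_smul measurableSet_Ioi hderiv hinj
      (fun y => exp (-y ^ 2))
    rw [image_mul_sub_div_Ioi hα hc, integrableOn_univ,
      integrableOn_congr_fun habs measurableSet_Ioi] at this
    exact this.1 (by simpa using integrable_exp_neg_mul_sq one_pos)
  have hint_f : IntegrableOn f (Ioi 0) := by
    refine (hint.const_mul α⁻¹).mono' (by fun_prop) ?_
    filter_upwards [ae_restrict_mem measurableSet_Ioi] with x hx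
    have : 0 < x := hx
    rw [norm_of_nonneg (exp_nonneg _), ← mul_assoc]
    refine le_mul_of_one_le_left (exp_nonneg _) ?_
    rw [inv_mul_eq_div, le_div_iff₀ hα]
    have : 0 ≤ c / x ^ 2 := by positivity
    linarith
  -- `x ↦ (c / α) / x` reverses the sign of `α * x - c / x`
  have hrefl : ∫ x in Ioi 0, c / x ^ 2 * f x = α * ∫ x in Ioi 0, f x := by
    rw [← integral_comp_div_Ioi f (div_pos hc hα), ← integral_const_mul]
    refine setIntegral_congr_fun measurableSet_Ioi fun x hx => ?_
    have : 0 < x := hx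
    simp only [hf, smul_eq_mul]
    field_simp
    ring_nf
  have hsplit := integral_sub hint (hint_f.const_mul α)
  rw [hsub] at hsplit
  simp only [add_mul, add_sub_cancel_left, integral_const_mul, hrefl] at hsplit
  rw [eq_div_iff (by positivity)]
  linarith
end

theorem integral_rpow_neg_half_mul_exp_neg_mul_sub_div {p q : ℝ} (hp : 0 < p) (hq : 0 < q) :
    ∫ u in Ioi 0, u ^ (-(1 / 2) : ℝ) * exp (-(p * u) - q / u)
      = √(π / p) * exp (-(2 * √(p * q))) := by
  have hsub := integral_comp_sq_add_Ioi le_rfl 0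
    (fun u : ℝ => u ^ (-(1 / 2) : ℝ) * exp (-(p * u) - q / u))
  simp only [ne_eq, OfNat.ofNat_ne_zero, not_false_eq_true, zero_pow, add_zero] at hsub
  rw [← hsub]
  -- completing the square: `p x² + q / x² = (√p x - √q / x)² + 2 √(pq)`
  have hsq : ∀ x ∈ Ioi (0 : ℝ),
      (2 * x) • ((x ^ 2) ^ (-(1 / 2) : ℝ) * exp (-(p * x ^ 2) - q / x ^ 2))
        = 2 * exp (-(2 * √(p * q))) * exp (-(√p * x - √q / x) ^ 2) := by
    intro x hx
    have hx : 0 < x := hx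
    rw [smul_eq_mul, rpow_neg (sq_nonneg x), ← sqrt_eq_rpow, sqrt_sq hx.le, mul_assoc,
      mul_inv_cancel_left₀ hx.ne', mul_assoc, ← exp_add, sqrt_mul hp.le]
    congr 2
    field_simp
    linear_combination (x ^ 4) * sq_sqrt hp.le + sq_sqrt hq.le
  rw [setIntegral_congr_fun measurableSet_Ioi hsq, integral_const_mul,
    integral_exp_neg_sq_mul_sub_div (sqrt_pos.2 hp) (sqrt_pos.2 hq), sqrt_div' _ hp.le]
  field_simp

lemma integrableOn_rpow_neg_half_mul_exp_neg_mul_sub_div {p q : ℝ} (hp : 0 < p) (hq : 0 < q) :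
    IntegrableOn (fun u => u ^ (-(1 / 2) : ℝ) * exp (-(p * u) - q / u)) (Ioi 0) :=
  Integrable.of_integral_ne_zero <| by
    rw [integral_rpow_neg_half_mul_exp_neg_mul_sub_div hp hq]
    positivity

lemma integrableOn_rpow_sq_add_mul_exp_neg_mul {a e k : ℝ} (ha : a ≤ 1) (he : e ≤ 0)
    (hk : 0 < k) :
    IntegrableOn (fun t => (a + t ^ 2) ^ e * exp (-k * t)) (Ioi √(1 - a)) := by
  refine (exp_neg_integrableOn_Ioi _ hk).mono' (by fun_prop) ?_
  filter_upwards [ae_restrict_mem measurableSet_Ioi] with t ht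
  have ht : √(1 - a) < t := ht
  have : 1 ≤ a + t ^ 2 := by
    have := sq_lt_sq' (by linarith [sqrt_nonneg (1 - a)]) ht
    rw [sq_sqrt (by linarith)] at this
    linarith
  rw [norm_of_nonneg (by positivity)]
  exact mul_le_of_le_one_left (exp_nonneg _) (rpow_le_one_of_one_le_of_nonpos this he)

lemma two_mul_smul_rpow_mul_sqrt_div_mul_exp_sq_add (a b e : ℝ) {t : ℝ} (ht : 0 < t) :
    (2 * t) • ((t ^ 2 + a) ^ e *
        (√(π / (t ^ 2 + a - a)) * exp (-(2 * √((t ^ 2 + a - a) * b)))))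
      = 2 * √π * ((a + t ^ 2) ^ e * exp (-2 * √b * t)) := by
  rw [add_sub_cancel_right, smul_eq_mul, sqrt_div' _ (sq_nonneg t), sqrt_mul (sq_nonneg t),
    sqrt_sq ht.le, add_comm (t ^ 2) a, neg_mul, neg_mul, mul_comm t]
  field_simp

lemma integral_Ioi_one_rpow_mul_sqrt_div_mul_exp {a : ℝ} (ha : a ≤ 1) (b e : ℝ) :
    ∫ s in Ioi 1, s ^ e * (√(π / (s - a)) * exp (-(2 * √((s - a) * b))))
      = 2 * √π * ∫ t in Ioi √(1 - a), (a + t ^ 2) ^ e * exp (-2 * √b * t) := by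
  have := integral_comp_sq_add_Ioi (sqrt_nonneg (1 - a)) a
    fun s => s ^ e * (√(π / (s - a)) * exp (-(2 * √((s - a) * b))))
  rw [sq_sqrt (by linarith), sub_add_cancel] at this
  rw [← this, ← integral_const_mul]
  exact setIntegral_congr_fun measurableSet_Ioi fun t ht =>
    two_mul_smul_rpow_mul_sqrt_div_mul_exp_sq_add a b e ((sqrt_nonneg _).trans_lt ht)

lemma integrableOn_Ioi_one_rpow_mul_sqrt_div_mul_exp {a b e : ℝ} (ha : a ≤ 1) (hb : 0 < b)
    (he : e ≤ 0) :
    IntegrableOn (fun s => s ^ e * (√(π / (s - a)) * exp (-(2 * √((s - a) * b)))))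
      (Ioi 1) := by
  have := integrableOn_comp_sq_add_Ioi_iff (sqrt_nonneg (1 - a)) a
    fun s => s ^ e * (√(π / (s - a)) * exp (-(2 * √((s - a) * b))))
  rw [sq_sqrt (by linarith), sub_add_cancel] at this
  refine this.1 <| IntegrableOn.congr_fun ((integrableOn_rpow_sq_add_mul_exp_neg_mul ha he
    (mul_pos two_pos (sqrt_pos.2 hb))).const_mul (2 * √π)) (fun t ht => ?_) measurableSet_Ioi
  rw [two_mul_smul_rpow_mul_sqrt_div_mul_exp_sq_add a b e ((sqrt_nonneg _).trans_lt ht)]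
  simp only [neg_mul]

theorem integral_uGamma_eq (lam a b : ℝ) (hlam : 0 < lam) (ha : a ∈ Set.Ioc (0:ℝ) 1)
    (hb : 0 < b) :
    ∫ u in Set.Ioi (0:ℝ), Real.exp (a * u - b / u) * u ^ (lam - 1) * uGamma (1 / 2 - lam) u
      = 2 * Real.sqrt Real.pi *
        ∫ t in Set.Ioi (Real.sqrt (1 - a)),
          (a + t ^ 2) ^ (-lam - 1 / 2) * Real.exp (-2 * Real.sqrt b * t) := by
  set F : ℝ → ℝ → ℝ := fun u s =>
    s ^ (-lam - 1 / 2) * (u ^ (-(1 / 2) : ℝ) * exp (-((s - a) * u) - b / u)) with hF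
  have h_uGamma (u : ℝ) (hu : u ∈ Ioi 0) :
      exp (a * u - b / u) * u ^ (lam - 1) * uGamma (1 / 2 - lam) u = ∫ s in Ioi 1, F u s := by
    rw [uGamma_eq_rpow_mul_integral_Ioi_one _ hu, ← integral_const_mul, ← integral_const_mul]
    refine setIntegral_congr_fun measurableSet_Ioi fun s _ => ?_
    have hpow : u ^ (-(1 / 2) : ℝ) = u ^ (lam - 1) * u ^ (1 / 2 - lam) := by
      rw [← rpow_add hu]; ring_nf
    have hexp : exp (-((s - a) * u) - b / u) = exp (a * u - b / u) * exp (-(u * s)) := by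
      rw [← exp_add]; ring_nf
    simp only [hF]
    rw [hpow, hexp, show (1 : ℝ) / 2 - lam - 1 = -lam - 1 / 2 by ring]
    ring
  have h_inner (s : ℝ) (hs : s ∈ Ioi 1) : ∫ u in Ioi 0, F u s
      = s ^ (-lam - 1 / 2) * (√(π / (s - a)) * exp (-(2 * √((s - a) * b)))) := by
    have : 0 < s - a := by linarith [ha.2, mem_Ioi.1 hs]
    rw [integral_const_mul, integral_rpow_neg_half_mul_exp_neg_mul_sub_div this hb]
  have h_int := integrableOn_Ioi_one_rpow_mul_sqrt_div_mul_exp ha.2 hb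
    (by linarith : -lam - 1 / 2 ≤ 0)
  rw [setIntegral_congr_fun measurableSet_Ioi h_uGamma, integral_integral_swap_of_nonneg ?_ ?_ ?_
    (h_int.congr_fun (fun s hs => (h_inner s hs).symm) measurableSet_Ioi),
    setIntegral_congr_fun measurableSet_Ioi h_inner,
    integral_Ioi_one_rpow_mul_sqrt_div_mul_exp ha.2]
  · exact (by fun_prop : Measurable fun p : ℝ × ℝ => F p.1 p.2).aestronglyMeasurable
  · filter_upwards [ae_restrict_mem measurableSet_Ioi] with s (hs : 1 < s)
    filter_upwards [ae_restrict_mem measurableSet_Ioi] with u (hu : 0 < u)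
    have : 0 < s := zero_lt_one.trans hs
    positivity
  · filter_upwards [ae_restrict_mem measurableSet_Ioi] with s (hs : 1 < s)
    exact (integrableOn_rpow_neg_half_mul_exp_neg_mul_sub_div
      (by linarith [ha.2]) hb).const_mul _
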